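/- Every finite $p$-group of order $p^n$ has derived length at most 1 + log₂ n for n ≥ 1; consequently, a soluble bound d for a favourable presentation of G built on a composition series refining the derived series satisfies d ≤ 1 + log₂(n-1) when n ≥ 2. -/

import Mathlib

/-! The derived series descends at least twice as fast as the lower central series: the three
subgroups lemma gives `⁅γ a, γ b⁆ ≤ γ (a + b + 1)` (indexed from `γ 0 = G`), so
`G⁽ⁱ⁾ ≤ γ (2 ^ i - 1)`.
A group of order `p ^ n` with `n ≥ 2` has nilpotency class at most `n - 1`: groups of order `p ^ 2`
are abelian, and passing to `G ⧸ Z(G)` lowers the class by one and the exponent `n` by at least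
one. Hence `G⁽ⁱ⁾ = 1` as soon as `n ≤ 2 ^ i`, and the derived length is at most
`⌈log₂ n⌉ ≤ 1 + log₂ (n - 1)`. -/

open Subgroup

namespace Subgroup

variable {G : Type*} [Group G]

theorem commutator_commutator_le_of_rotate {H₁ H₂ H₃ N : Subgroup G} [N.Normal]
    (h1 : ⁅⁅H₂, H₃⁆, H₁⁆ ≤ N) (h2 : ⁅⁅H₃, H₁⁆, H₂⁆ ≤ N) : ⁅⁅H₁, H₂⁆, H₃⁆ ≤ N := by
  have hmodN : ∀ X Y Z : Subgroup G, ⁅⁅X, Y⁆, Z⁆ ≤ N ↔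
      ⁅⁅X.map (QuotientGroup.mk' N), Y.map (QuotientGroup.mk' N)⁆,
        Z.map (QuotientGroup.mk' N)⁆ = ⊥ := fun X Y Z => by
    rw [← map_commutator, ← map_commutator, map_eq_bot_iff, QuotientGroup.ker_mk']
  rw [hmodN] at h1 h2 ⊢
  exact commutator_commutator_eq_bot_of_rotate h1 h2

theorem commutator_lowerCentralSeries_le (a b : ℕ) :
    ⁅(⊤ : Subgroup G).lowerCentralSeries a, (⊤ : Subgroup G).lowerCentralSeries b⁆ ≤
      (⊤ : Subgroup G).lowerCentralSeries (a + b + 1) := by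
  induction a generalizing b with
  | zero => rw [lowerCentralSeries_zero, commutator_comm, Nat.zero_add, lowerCentralSeries_succ]
  | succ a ih =>
    rw [lowerCentralSeries_succ]
    apply commutator_commutator_le_of_rotate
    · rw [commutator_comm ⊤, ← lowerCentralSeries_succ, commutator_comm]
      simpa only [Nat.add_right_comm, Nat.add_assoc] using ih (b + 1)
    · rw [show a + 1 + b + 1 = a + b + 1 + 1 by omega, lowerCentralSeries_succ,
        commutator_comm _ (lowerCentralSeries ⊤ a)]
      exact commutator_mono (ih b) le_rfl

theorem derivedSeries_le_lowerCentralSeries_two_pow_sub_one (i : ℕ) :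
    derivedSeries G i ≤ (⊤ : Subgroup G).lowerCentralSeries (2 ^ i - 1) := by
  induction i with
  | zero => rfl
  | succ i ih =>
    calc derivedSeries G (i + 1) = ⁅derivedSeries G i, derivedSeries G i⁆ := derivedSeries_succ G i
      _ ≤ (⊤ : Subgroup G).lowerCentralSeries (2 ^ i - 1 + (2 ^ i - 1) + 1) :=
        (commutator_mono ih ih).trans (commutator_lowerCentralSeries_le _ _)
      _ = (⊤ : Subgroup G).lowerCentralSeries (2 ^ (i + 1) - 1) := by
        have := Nat.one_le_two_pow (n := i)
        rw [pow_succ]; congr 1; omega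

end Subgroup

theorem derivedSeries_eq_bot_of_nilpotencyClass_lt {G : Type*} [Group G] [Group.IsNilpotent G]
    {i : ℕ} (h : Group.nilpotencyClass G < 2 ^ i) : derivedSeries G i = ⊥ :=
  le_bot_iff.mp <| (derivedSeries_le_lowerCentralSeries_two_pow_sub_one i).trans <|
    (Subgroup.lowerCentralSeries_eq_bot_iff_nilpotencyClass_le.mpr (by omega)).le

namespace IsPGroup

variable {p n : ℕ} [Fact p.Prime] {G : Type*}

theorem finite_of_card_eq_prime_pow (hG : Nat.card G = p ^ n) : Finite G :=
  Nat.finite_of_card_ne_zero (hG ▸ pow_ne_zero n (NeZero.ne p))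

variable [Group G]

theorem isMulCommutative_of_card_eq_prime_pow_of_le_two (hG : Nat.card G = p ^ n) (hn : n ≤ 2) :
    IsMulCommutative G := by
  rcases Nat.lt_or_eq_of_le hn with hn | rfl
  · have : IsCyclic G := isCyclic_of_card_dvd_prime (p := p) <| by
      simpa [hG] using pow_dvd_pow p (show n ≤ 1 by omega)
    exact IsCyclic.isMulCommutative
  · exact isMulCommutative_of_card_eq_prime_sq hG

theorem card_quotient_center_eq_prime_pow (hG : Nat.card G = p ^ n) (hn : 0 < n) :
    ∃ m < n, Nat.card (G ⧸ center G) = p ^ m := by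
  have := finite_of_card_eq_prime_pow hG
  obtain ⟨m, hm⟩ := ((of_card hG).to_quotient (center G)).exists_card_eq
  obtain ⟨k, hk, hZ⟩ := card_center_eq_prime_pow hG hn
  have hmul := (center G).card_mul_index
  rw [Subgroup.index, hZ, hm, hG, ← pow_add] at hmul
  exact ⟨m, by have := Nat.pow_right_injective (Fact.out : p.Prime).two_le hmul; omega, hm⟩

theorem nilpotencyClass_le_of_card_eq_prime_pow (hG : Nat.card G = p ^ n) :
    Group.nilpotencyClass G ≤ max 1 (n - 1) := by
  induction n using Nat.strong_induction_on generalizing G with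
  | _ n ih =>
  have := finite_of_card_eq_prime_pow hG
  have : Group.IsNilpotent G := (of_card hG).isNilpotent
  rcases le_or_gt n 2 with hn | hn
  · have := isMulCommutative_of_card_eq_prime_pow_of_le_two hG hn
    exact (Group.IsNilpotent.nilpotencyClass_le_one_iff.mpr this).trans (le_max_left _ _)
  · obtain ⟨m, hmn, hm⟩ := card_quotient_center_eq_prime_pow hG (by omega)
    have hquot := ih m hmn hm
    have hclass := Group.nilpotencyClass_quotient_center (G := G)
    omega

theorem derivedSeries_eq_bot_of_card_eq_prime_pow (hG : Nat.card G = p ^ n) {i : ℕ}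
    (hi : max 1 (n - 1) < 2 ^ i) : derivedSeries G i = ⊥ :=
  have := finite_of_card_eq_prime_pow hG
  have : Group.IsNilpotent G := (of_card hG).isNilpotent
  derivedSeries_eq_bot_of_nilpotencyClass_lt <|
    (nilpotencyClass_le_of_card_eq_prime_pow hG).trans_lt hi

end IsPGroup

theorem Nat.clog_le_one_add_logb_sub_one {b n : ℕ} (hb : 1 < b) (hn : 2 ≤ n) :
    (Nat.clog b n : ℝ) ≤ 1 + Real.logb b (n - 1) := by
  have hpos : 0 < Nat.clog b n := Nat.clog_pos hb hn
  have hlt : b ^ (Nat.clog b n - 1) ≤ n - 1 := by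
    have := Nat.pow_pred_clog_lt_self hb (x := n) (by omega)
    rw [Nat.pred_eq_sub_one] at this
    omega
  have hbR : (1 : ℝ) < b := by exact_mod_cast hb
  have hn1 : ((n - 1 : ℕ) : ℝ) = n - 1 := Nat.cast_sub (by omega) |>.trans (by simp)
  have : ((Nat.clog b n - 1 : ℕ) : ℝ) ≤ Real.logb b (n - 1) := by
    rw [← hn1, Real.le_logb_iff_rpow_le hbR (by exact_mod_cast (by omega : 0 < n - 1)),
      Real.rpow_natCast]
    exact_mod_cast hlt
  push_cast [hpos] at this
  linarith

theorem derived_length_bounds_of_pGroup_general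
    (p n : ℕ) (hp : p.Prime) (G : Type*) [Group G]
    (hG : Nat.card G = p ^ n) (d : ℕ)
    (hmin : ∀ k < d, derivedSeries G k ≠ ⊥) :
    (1 ≤ n → (d : ℝ) ≤ 1 + Real.logb 2 n) ∧
    (2 ≤ n → (d : ℝ) ≤ 1 + Real.logb 2 ((n : ℝ) - 1)) := by
  have := Fact.mk hp
  have hd : ∀ i, max 1 (n - 1) < 2 ^ i → d ≤ i := fun i hi =>
    not_lt.mp fun hid => hmin i hid (IsPGroup.derivedSeries_eq_bot_of_card_eq_prime_pow hG hi)
  have hd_sub_one (hn : 2 ≤ n) : (d : ℝ) ≤ 1 + Real.logb 2 ((n : ℝ) - 1) := by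
    have hclog : d ≤ Nat.clog 2 n :=
      hd _ (by have := Nat.le_pow_clog one_lt_two n; omega)
    exact (Nat.cast_le.mpr hclog).trans (mod_cast Nat.clog_le_one_add_logb_sub_one one_lt_two hn)
  refine ⟨fun hn => ?_, hd_sub_one⟩
  rcases hn.eq_or_lt with rfl | hn
  · simpa using hd 1 (by norm_num)
  · have : (1 : ℝ) < n := mod_cast hn
    refine (hd_sub_one hn).trans ?_
    gcongr <;> linarith

/-- Every finite p-group of order `p ^ n` has derived length at most
`1 + log₂ n` for `n ≥ 1`; consequently the derived length `d` satisfies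
`d ≤ 1 + log₂ (n - 1)` when `n ≥ 2`. -/
theorem derived_length_bounds_of_pGroup
    (p n : ℕ) (hp : p.Prime) (G : Type*) [Group G] [Finite G]
    (hG : Nat.card G = p ^ n) (d : ℕ)
    (hd : derivedSeries G d = ⊥) (hmin : ∀ k < d, derivedSeries G k ≠ ⊥) :
    (1 ≤ n → (d : ℝ) ≤ 1 + Real.logb 2 n) ∧
    (2 ≤ n → (d : ℝ) ≤ 1 + Real.logb 2 ((n : ℝ) - 1)) :=
  derived_length_bounds_of_pGroup_general p n hp G hG d hmin
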